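/- Functoriality of r-jets of curves: if f, g : ℝ → ℝ^m are smooth curves with the same r-jet at 0 and h : ℝ^m → ℝ^n is smooth, then h ∘ f and h ∘ g have the same r-jet at 0. -/
import Mathlib

open FormalMultilinearSeries

/-- The `k`-th term of a Taylor composition only depends on the terms of the two series
up to index `k`. -/
lemma taylorComp_congr {E F G : Type*} [NormedAddCommGroup E] [NormedSpace ℝ E]
    [NormedAddCommGroup F] [NormedSpace ℝ F] [NormedAddCommGroup G] [NormedSpace ℝ G]
    (q q' : FormalMultilinearSeries ℝ F G) (p p' : FormalMultilinearSeries ℝ E F) (k : ℕ)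
    (hq : ∀ i ≤ k, q i = q' i) (hp : ∀ i ≤ k, p i = p' i) :
    q.taylorComp p k = q'.taylorComp p' k := by
  unfold FormalMultilinearSeries.taylorComp
  refine Finset.sum_congr rfl fun c _ => ?_
  unfold FormalMultilinearSeries.compAlongOrderedFinpartition
  rw [hq c.length c.length_le]
  congr 1
  ext i
  rw [hp (c.partSize i) (c.partSize_le i)]

/-- functoriality of r-jets: composing with a smooth map preserves
the "same r-jet at 0" relation. -/
theorem stmt_5 (m n r : ℕ) (f g : ℝ → (Fin m → ℝ)) (hf : ContDiff ℝ (⊤ : ℕ∞) f)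
    (hg : ContDiff ℝ (⊤ : ℕ∞) g) (h : (Fin m → ℝ) → (Fin n → ℝ)) (hh : ContDiff ℝ (⊤ : ℕ∞) h)
    (hfg : ∀ k ≤ r, iteratedDeriv k f 0 = iteratedDeriv k g 0) :
    ∀ k ≤ r, iteratedDeriv k (h ∘ f) 0 = iteratedDeriv k (h ∘ g) 0 := by
  have h0 : f 0 = g 0 := by simpa using hfg 0 (Nat.zero_le r)
  have hF : ∀ k ≤ r, iteratedFDeriv ℝ k f 0 = iteratedFDeriv ℝ k g 0 := by
    intro k hk
    ext v
    rw [iteratedFDeriv_apply_eq_iteratedDeriv_mul_prod,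
      iteratedFDeriv_apply_eq_iteratedDeriv_mul_prod, hfg k hk]
  have Hf : HasFTaylorSeriesUpTo (r : ℕ∞) f (ftaylorSeries ℝ f) := by
    rw [← hasFTaylorSeriesUpToOn_univ_iff, ← ftaylorSeriesWithin_univ]
    exact (contDiffOn_univ.mpr (hf.of_le (by exact_mod_cast le_top))).ftaylorSeriesWithin uniqueDiffOn_univ
  have Hg : HasFTaylorSeriesUpTo (r : ℕ∞) g (ftaylorSeries ℝ g) := by
    rw [← hasFTaylorSeriesUpToOn_univ_iff, ← ftaylorSeriesWithin_univ]
    exact (contDiffOn_univ.mpr (hg.of_le (by exact_mod_cast le_top))).ftaylorSeriesWithin uniqueDiffOn_univ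
  have Hh : HasFTaylorSeriesUpTo (r : ℕ∞) h (ftaylorSeries ℝ h) := by
    rw [← hasFTaylorSeriesUpToOn_univ_iff, ← ftaylorSeriesWithin_univ]
    exact (contDiffOn_univ.mpr (hh.of_le (by exact_mod_cast le_top))).ftaylorSeriesWithin uniqueDiffOn_univ
  have Hcf : HasFTaylorSeriesUpTo (r : ℕ∞) (h ∘ f)
      (fun x => (ftaylorSeries ℝ h (f x)).taylorComp (ftaylorSeries ℝ f x)) := by
    rw [← hasFTaylorSeriesUpToOn_univ_iff] at Hh Hf ⊢
    exact Hh.comp Hf (Set.mapsTo_univ _ _)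
  have Hcg : HasFTaylorSeriesUpTo (r : ℕ∞) (h ∘ g)
      (fun x => (ftaylorSeries ℝ h (g x)).taylorComp (ftaylorSeries ℝ g x)) := by
    rw [← hasFTaylorSeriesUpToOn_univ_iff] at Hh Hg ⊢
    exact Hh.comp Hg (Set.mapsTo_univ _ _)
  intro k hk
  have hkr : (k : ℕ∞) ≤ (r : ℕ∞) := Nat.cast_le.mpr hk
  rw [iteratedDeriv_eq_iteratedFDeriv, iteratedDeriv_eq_iteratedFDeriv,
    ← Hcf.eq_iteratedFDeriv (by exact_mod_cast hkr) 0,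
    ← Hcg.eq_iteratedFDeriv (by exact_mod_cast hkr) 0]
  congr 1
  apply taylorComp_congr
  · intro i _; rw [h0]
  · intro i hi
    exact hF i (le_trans hi hk)
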